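/- arXiv:2603.06701 — 4 statements merged into one kernel-verified Lean document; each statement's English description precedes it below -/
import Mathlib

section
/- For every integer n ≥ 2 and every θ ∈ ℝ, the function θ ↦ F_{n+1}(θ) is differentiable at θ with derivative F_n(θ); that is, HasDerivAt (fun θ => I^(-(n+1)) * ∑' k : ℕ+, Complex.exp (I*k*θ) / k^(n+1)) (I^(-n) * ∑' k : ℕ+, Complex.exp (I*k*θ) / k^n) θ. -/
/-! Differentiate termwise: the `k`-th term of the series for `n + 1` has derivative
`i e^{ikθ} / k^n`, of norm `1 / k^n`, which is summable for `n ≥ 2`; the factor `i` turns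
`i^{-(n+1)}` into `i^{-n}`. -/

open Complex Real Filter

lemma summable_pnat_one_div_pow {p : ℕ} (hp : 1 < p) :
    Summable (fun k : ℕ+ => 1 / (k : ℝ) ^ p) :=
  (Real.summable_one_div_nat_pow.2 hp).comp_injective PNat.coe_injective

lemma norm_exp_I_mul_natCast_mul_ofReal (k : ℕ) (θ : ℝ) : ‖exp (I * k * θ)‖ = 1 := by
  rw [show I * k * θ = ((k * θ : ℝ) : ℂ) * I by push_cast; ring]
  exact norm_exp_ofReal_mul_I _

lemma norm_exp_I_mul_natCast_mul_ofReal_div_pow (k : ℕ) (θ : ℝ) (m : ℕ) :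
    ‖exp (I * k * θ) / (k : ℂ) ^ m‖ = 1 / (k : ℝ) ^ m := by
  rw [norm_div, norm_exp_I_mul_natCast_mul_ofReal, norm_pow, Complex.norm_natCast]

lemma hasDerivAt_exp_I_mul_natCast_mul_ofReal_div_pow_succ {k : ℕ} (hk : k ≠ 0) (m : ℕ)
    (θ : ℝ) :
    HasDerivAt (fun θ : ℝ => exp (I * k * θ) / (k : ℂ) ^ (m + 1))
      (I * (exp (I * k * θ) / (k : ℂ) ^ m)) θ := by
  have hinner : HasDerivAt (fun θ : ℝ => I * k * (θ : ℂ)) (I * k) θ := by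
    simpa using (hasDerivAt_id θ).ofReal_comp.const_mul (I * (k : ℂ))
  refine (hinner.cexp.div_const ((k : ℂ) ^ (m + 1))).congr_deriv ?_
  have hk' : (k : ℂ) ≠ 0 := Nat.cast_ne_zero.2 hk
  field_simp
  ring

theorem hasDerivAt_tsum_exp_I_mul_div_pow_succ {m : ℕ} (hm : 1 < m) (θ : ℝ) :
    HasDerivAt (fun θ : ℝ => ∑' k : ℕ+, exp (I * k * θ) / (k : ℂ) ^ (m + 1))
      (I * ∑' k : ℕ+, exp (I * k * θ) / (k : ℂ) ^ m) θ := by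
  rw [← tsum_mul_left]
  refine hasDerivAt_tsum (summable_pnat_one_div_pow hm)
    (fun k => hasDerivAt_exp_I_mul_natCast_mul_ofReal_div_pow_succ k.ne_zero m)
    (fun k x => ?_) (y₀ := θ) ?_ θ
  · rw [norm_mul, norm_I, one_mul, norm_exp_I_mul_natCast_mul_ofReal_div_pow]
  · refine Summable.of_norm ?_
    simpa only [norm_exp_I_mul_natCast_mul_ofReal_div_pow] using
      summable_pnat_one_div_pow (p := m + 1) (by omega)

/-- Uniform recursion backbone: for every integer `n ≥ 2` and every real `θ`,
`d/dθ F_{n+1}(θ) = F_n(θ)` where `F_n(θ) = i^(-n) ∑_{k≥1} e^{ikθ}/k^n`. -/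
theorem backbone_recursion (n : ℕ) (hn : 2 ≤ n) (θ : ℝ) :
    HasDerivAt
      (fun θ : ℝ => I ^ (-((n : ℤ) + 1)) *
        ∑' k : ℕ+, Complex.exp (I * k * θ) / (k : ℂ) ^ (n + 1))
      (I ^ (-(n : ℤ)) * ∑' k : ℕ+, Complex.exp (I * k * θ) / (k : ℂ) ^ n) θ := by
  have hI : I ^ (-((n : ℤ) + 1)) * I = I ^ (-(n : ℤ)) := by
    rw [← zpow_add_one₀ I_ne_zero]
    ring_nf
  have hderiv := (hasDerivAt_tsum_exp_I_mul_div_pow_succ hn θ).const_mul (I ^ (-((n : ℤ) + 1)))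
  rwa [← mul_assoc, hI] at hderiv
end

section
/- For every θ ∈ (0, 2π), the function θ ↦ −∑_{k=1}^∞ e^{ikθ}/k² is differentiable at θ with derivative i·log(1 − e^{iθ}), where log denotes the principal branch of the complex logarithm; that is, HasDerivAt (fun θ => -(∑' k : ℕ+, Complex.exp (I*k*θ) / k^2)) (I * Complex.log (1 - Complex.exp (I*θ))) θ. -/
open Complex Real Filter Topology Set

/-! Abel regularisation. For `|r| < 1` the series `-∑ rᵏ e^{ikθ}/k²` can be differentiated
termwise, with derivative `-i ∑ (r e^{iθ})ᵏ/k = i log(1 - r e^{iθ})`. As `r → 1⁻` these functions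
converge pointwise (dominated by `∑ 1/k²`), and their derivatives converge locally uniformly on
`(0, 2π)` because `(r, θ) ↦ i log(1 - r e^{iθ})` is continuous on `[0, 1] × (0, 2π)`, where
`1 - r e^{iθ}` never meets the branch cut. Locally uniform convergence of the derivatives passes
the derivative to the limit. -/

lemma Complex.hasSum_pnat_pow_div_eq_neg_log {z : ℂ} (hz : ‖z‖ < 1) :
    HasSum (fun k : ℕ+ => z ^ (k : ℕ) / k) (-log (1 - z)) := by
  rw [hasSum_pnat_iff_hasSum_succ (f := fun n : ℕ => z ^ n / n)]
  exact_mod_cast hasSum_taylorSeries_neg_log' hz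

lemma Complex.one_sub_mem_slitPlane {w : ℂ} (hw : ‖w‖ ≤ 1) (hw1 : w ≠ 1) :
    1 - w ∈ slitPlane := by
  rw [mem_slitPlane_iff]
  by_contra! h
  simp only [sub_re, one_re, sub_im, one_im, zero_sub, neg_eq_zero, sub_nonpos] at h
  have hre : w.re ≤ 1 := (re_le_norm w).trans hw
  exact hw1 (Complex.ext (by simp; linarith [h.1]) (by simp [h.2]))

lemma Complex.exp_I_mul_ne_one {x : ℝ} (hx : x ∈ Ioo 0 (2 * π)) : exp (I * x) ≠ 1 := by
  intro h
  have hcos : Real.cos x = 1 := by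
    simpa [mul_comm I, exp_ofReal_mul_I_re] using congrArg re h
  rw [cos_eq_one_iff_of_lt_of_lt (by linarith [hx.1, pi_pos]) hx.2] at hcos
  exact hx.1.ne' hcos

lemma Complex.one_sub_ofReal_mul_exp_I_mul_mem_slitPlane {r x : ℝ} (hr : r ∈ Icc 0 1)
    (hx : x ∈ Ioo 0 (2 * π)) : 1 - r * exp (I * x) ∈ slitPlane := by
  have hnorm : ‖(r : ℂ) * exp (I * x)‖ = r := by
    rw [norm_mul, mul_comm I, norm_exp_ofReal_mul_I, mul_one, norm_real, Real.norm_of_nonneg hr.1]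
  refine one_sub_mem_slitPlane (hnorm.le.trans hr.2) fun h => exp_I_mul_ne_one hx ?_
  have hr1 : r = 1 := by simpa only [hnorm, norm_one] using congrArg norm h
  simpa [hr1] using h

lemma Complex.norm_pow_mul_exp_I_mul_div_sq (w : ℂ) (k : ℕ) (θ : ℝ) :
    ‖w ^ k * exp (I * k * θ) / (k : ℂ) ^ 2‖ = ‖w‖ ^ k / (k : ℝ) ^ 2 := by
  rw [norm_div, norm_mul, show I * k * θ = ((k * θ : ℝ) : ℂ) * I by push_cast; ring,
    norm_exp_ofReal_mul_I]
  simp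

lemma Complex.hasDerivAt_neg_tsum_pow_mul_exp_I_mul_div_sq {w : ℂ} (hw : ‖w‖ < 1) (θ : ℝ) :
    HasDerivAt (fun θ : ℝ => -∑' k : ℕ+, w ^ (k : ℕ) * exp (I * k * θ) / (k : ℂ) ^ 2)
      (I * log (1 - w * exp (I * θ))) θ := by
  have hterm (k : ℕ+) (y : ℝ) :
      HasDerivAt (fun θ : ℝ => w ^ (k : ℕ) * exp (I * k * θ) / (k : ℂ) ^ 2)
        (I * ((w * exp (I * y)) ^ (k : ℕ) / k)) y := by
    have hlin : HasDerivAt (fun θ : ℝ => I * k * (θ : ℂ)) (I * k) y := by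
      simpa using (hasDerivAt_id y).ofReal_comp.const_mul (I * (k : ℂ))
    refine ((hlin.cexp.const_mul (w ^ (k : ℕ))).div_const ((k : ℂ) ^ 2)).congr_deriv ?_
    rw [mul_pow, ← exp_nat_mul]
    field_simp
  have hbound (k : ℕ+) (y : ℝ) : ‖I * ((w * exp (I * y)) ^ (k : ℕ) / k)‖ ≤ ‖w‖ ^ (k : ℕ) := by
    rw [norm_mul, norm_I, one_mul, norm_div, norm_pow, norm_mul, mul_comm I,
      norm_exp_ofReal_mul_I, mul_one, norm_natCast]
    exact div_le_self (by positivity) (Nat.one_le_cast.mpr k.pos)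
  have hsum : Summable fun k : ℕ+ => ‖w‖ ^ (k : ℕ) :=
    (summable_geometric_of_lt_one (norm_nonneg w) hw).subtype _
  have hsum0 : Summable fun k : ℕ+ => w ^ (k : ℕ) * exp (I * k * (0 : ℝ)) / (k : ℂ) ^ 2 := by
    refine hsum.of_norm_bounded fun k => ?_
    rw [norm_pow_mul_exp_I_mul_div_sq]
    exact div_le_self (by positivity) (one_le_pow₀ (Nat.one_le_cast.mpr k.pos))
  have hlog := (hasSum_pnat_pow_div_eq_neg_log (z := w * exp (I * θ)) ?_).mul_left I
  · refine (hasDerivAt_tsum hsum hterm hbound hsum0 θ).neg.congr_deriv ?_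
    rw [hlog.tsum_eq]
    ring
  · rwa [norm_mul, mul_comm I, norm_exp_ofReal_mul_I, mul_one]

lemma Complex.continuousOn_tsum_pow_mul_exp_I_mul_div_sq (θ : ℝ) :
    ContinuousOn (fun w : ℂ => ∑' k : ℕ+, w ^ (k : ℕ) * exp (I * k * θ) / (k : ℂ) ^ 2)
      (Metric.closedBall 0 1) := by
  refine continuousOn_tsum (u := fun k : ℕ+ => 1 / ((k : ℕ) : ℝ) ^ 2) (fun k => by fun_prop)
    ((Real.summable_one_div_nat_pow.mpr one_lt_two).subtype _) fun k w hw => ?_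
  rw [norm_pow_mul_exp_I_mul_div_sq]
  gcongr
  exact pow_le_one₀ (norm_nonneg w) (mem_closedBall_zero_iff.mp hw)

lemma ContinuousOn.tendstoLocallyUniformlyOn_nhdsWithin {α β E : Type*} [TopologicalSpace α]
    [TopologicalSpace β] [LocallyCompactSpace β] [UniformSpace E] {f : α → β → E} {s : Set α}
    {U : Set β} {q : α} (hU : IsOpen U) (hf : ContinuousOn f.uncurry (s ×ˢ U)) (hq : q ∈ s) :
    TendstoLocallyUniformlyOn f (f q) (𝓝[s] q) U := by
  refine (tendstoLocallyUniformlyOn_iff_forall_isCompact hU).mpr fun K hKU hK u hu => ?_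
  obtain ⟨v, hv, hvu⟩ := hK.mem_uniformity_of_prod (hf.mono (prod_mono subset_rfl hKU)) hq
    (symm_le_uniformity hu)
  exact Filter.mem_of_superset hv fun p hp x hx => hvu p hp x hx

lemma TendstoLocallyUniformlyOn.mono_left {ι α β : Type*} [TopologicalSpace α] [UniformSpace β]
    {F : ι → α → β} {f : α → β} {p p' : Filter ι} {s : Set α}
    (h : TendstoLocallyUniformlyOn F f p s) (hp : p' ≤ p) : TendstoLocallyUniformlyOn F f p' s :=
  fun u hu x hx => let ⟨t, ht, hF⟩ := h u hu x hx; ⟨t, ht, hp hF⟩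

/-- Base case of the recursion backbone: for `θ ∈ (0, 2π)`,
`d/dθ F₂(θ) = F₁(θ)`, i.e. the derivative of `-∑_{k≥1} e^{ikθ}/k²`
is `i · log(1 - e^{iθ})` (principal branch). -/
theorem backbone_base_case (θ : ℝ) (hθ : θ ∈ Set.Ioo 0 (2 * π)) :
    HasDerivAt
      (fun θ : ℝ => -(∑' k : ℕ+, Complex.exp (I * k * θ) / (k : ℂ) ^ 2))
      (I * Complex.log (1 - Complex.exp (I * θ))) θ := by
  set F : ℝ → ℝ → ℂ := fun r θ => -∑' k : ℕ+, (r : ℂ) ^ (k : ℕ) * exp (I * k * θ) / (k : ℂ) ^ 2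
  set F' : ℝ → ℝ → ℂ := fun r θ => I * log (1 - r * exp (I * θ))
  have hl : 𝓝[<] (1 : ℝ) ≤ 𝓝[Icc 0 1] 1 := by
    rw [← nhdsWithin_Ico_eq_nhdsLT zero_lt_one]
    exact nhdsWithin_mono _ Ico_subset_Icc_self
  have hderiv : ∀ᶠ r in 𝓝[<] (1 : ℝ), ∀ x ∈ Ioo 0 (2 * π), HasDerivAt (F r) (F' r x) x := by
    filter_upwards [Ioo_mem_nhdsLT (neg_lt_self one_pos)] with r hr x _
    exact hasDerivAt_neg_tsum_pow_mul_exp_I_mul_div_sq (by simpa [abs_lt] using hr) x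
  have hF (x : ℝ) : Tendsto (fun r => F r x) (𝓝[<] 1) (𝓝 (F 1 x)) := by
    have hmaps : MapsTo ((↑) : ℝ → ℂ) (Icc 0 1) (Metric.closedBall 0 1) := fun r hr => by
      simpa [abs_le] using ⟨by linarith [hr.1], hr.2⟩
    exact ((((continuousOn_tsum_pow_mul_exp_I_mul_div_sq x).comp
      continuous_ofReal.continuousOn hmaps).continuousWithinAt
        (right_mem_Icc.mpr zero_le_one)).tendsto.neg).mono_left hl
  have hF' : TendstoLocallyUniformlyOn F' (F' 1) (𝓝[<] 1) (Ioo 0 (2 * π)) := by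
    refine (ContinuousOn.tendstoLocallyUniformlyOn_nhdsWithin isOpen_Ioo (fun p hp => ?_)
      (right_mem_Icc.mpr zero_le_one)).mono_left hl
    exact (continuousAt_const.mul ((by fun_prop : Continuous fun p : ℝ × ℝ =>
      1 - (p.1 : ℂ) * exp (I * p.2)).continuousAt.clog
        (one_sub_ofReal_mul_exp_I_mul_mem_slitPlane hp.1 hp.2))).continuousWithinAt
  simpa [F, F'] using
    hasDerivAt_of_tendstoLocallyUniformlyOn isOpen_Ioo hF' hderiv (fun x _ => hF x) hθ
end

section
/- For every compact set K ⊆ ℂ, the functions z ↦ T(z; q) converge uniformly on K to z ↦ sin(πz) as q tends to 0 within the open unit disc; that is, for every ε > 0 there exists δ > 0 such that for all q ∈ ℂ with 0 < ‖q‖ < δ (and ‖q‖ < 1) and all z ∈ K, ‖T(z; q) − sin(πz)‖ < ε. -/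
/-!
With `s = ‖q‖² e^{2πR}`, the `n`-th term of the series is bounded by `e^{πR} sⁿ` whenever
`‖q‖ ≤ 1` and `‖z‖ ≤ R`: indeed `‖q‖^{n(n+1)} ≤ ‖q‖^{2n}` and `‖sin w‖ ≤ e^{‖w‖}`. The `n = 0` term
is `sin(πz)`, so `‖T(z; q) - sin(πz)‖ ≤ e^{πR} s / (1 - s)`, which tends to `0` with `q`
uniformly for `z` in the bounded set `K`.
-/

open Complex Real Filter

/-- The theta series `T(z; q) = ∑_{n≥0} (-1)^n q^{n(n+1)} sin((2n+1)πz)` for `‖q‖ < 1`. -/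
noncomputable def thetaSeries (z q : ℂ) : ℂ :=
  ∑' n : ℕ, (-1) ^ n * q ^ (n * (n + 1)) * Complex.sin ((2 * (n : ℂ) + 1) * (π : ℂ) * z)

open Topology

lemma Complex.norm_sin_le_exp_norm (w : ℂ) : ‖sin w‖ ≤ Real.exp ‖w‖ := by
  calc ‖sin w‖ = ‖exp (-w * I) - exp (w * I)‖ / 2 := by
        simp [Complex.sin]
    _ ≤ (Real.exp ‖w‖ + Real.exp ‖w‖) / 2 := by
        gcongr
        refine (norm_sub_le _ _).trans (add_le_add ?_ ?_) <;>
          exact (norm_exp_le_exp_norm _).trans_eq (by simp)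
    _ = Real.exp ‖w‖ := by ring

lemma norm_tsum_sub_zero_le_of_norm_le_geometric {E : Type*} [NormedAddCommGroup E]
    [CompleteSpace E] {f : ℕ → E} {C s : ℝ} (hs₀ : 0 ≤ s) (hs₁ : s < 1)
    (hf : ∀ n, ‖f n‖ ≤ C * s ^ n) : ‖∑' n, f n - f 0‖ ≤ C * s / (1 - s) := by
  have hsum : Summable f :=
    .of_norm_bounded ((summable_geometric_of_lt_one hs₀ hs₁).mul_left C) hf
  rw [hsum.tsum_eq_zero_add, add_sub_cancel_left, div_eq_mul_inv]
  refine tsum_of_norm_bounded ((hasSum_geometric_of_lt_one hs₀ hs₁).mul_left (C * s)) fun n ↦ ?_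
  simpa [pow_succ', mul_assoc] using hf (n + 1)

noncomputable def thetaTerm (z q : ℂ) (n : ℕ) : ℂ :=
  (-1) ^ n * q ^ (n * (n + 1)) * sin ((2 * (n : ℂ) + 1) * π * z)

lemma norm_thetaTerm_le {z q : ℂ} {R : ℝ} (hz : ‖z‖ ≤ R) (hq : ‖q‖ ≤ 1) (n : ℕ) :
    ‖thetaTerm z q n‖ ≤ Real.exp (π * R) * (‖q‖ ^ 2 * Real.exp (2 * π * R)) ^ n := by
  have hsin : ‖sin ((2 * (n : ℂ) + 1) * π * z)‖ ≤ Real.exp ((2 * n + 1) * π * R) := by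
    refine (norm_sin_le_exp_norm _).trans (Real.exp_le_exp.2 ?_)
    rw [norm_mul, norm_mul, Complex.norm_real, Real.norm_of_nonneg pi_pos.le]
    have hcoeff : ‖2 * (n : ℂ) + 1‖ = 2 * n + 1 := by
      exact_mod_cast Complex.norm_natCast (2 * n + 1)
    rw [hcoeff]
    gcongr
  calc ‖thetaTerm z q n‖ = ‖q‖ ^ (n * (n + 1)) * ‖sin ((2 * (n : ℂ) + 1) * π * z)‖ := by
        simp [thetaTerm]
    _ ≤ (‖q‖ ^ 2) ^ n * Real.exp ((2 * n + 1) * π * R) := by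
        rw [← pow_mul]
        gcongr ?_ * ?_
        have hexp : 2 * n ≤ n * (n + 1) := by nlinarith [Nat.le_self_pow two_ne_zero n]
        exact pow_le_pow_of_le_one (norm_nonneg _) hq hexp
    _ = Real.exp (π * R) * (‖q‖ ^ 2 * Real.exp (2 * π * R)) ^ n := by
        rw [mul_pow, ← Real.exp_nat_mul, mul_left_comm, ← Real.exp_add]
        ring_nf

lemma norm_thetaSeries_sub_sin_le {z q : ℂ} {R : ℝ} (hz : ‖z‖ ≤ R) (hq : ‖q‖ ≤ 1)
    (hs : ‖q‖ ^ 2 * Real.exp (2 * π * R) < 1) :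
    ‖thetaSeries z q - sin (π * z)‖ ≤ Real.exp (π * R) * (‖q‖ ^ 2 * Real.exp (2 * π * R)) /
      (1 - ‖q‖ ^ 2 * Real.exp (2 * π * R)) := by
  simpa [thetaSeries, thetaTerm] using
    norm_tsum_sub_zero_le_of_norm_le_geometric (by positivity) hs (norm_thetaTerm_le hz hq)

/-- Uniform trigonometric degeneration on compacts: for every compact `K ⊆ ℂ`
and every `ε > 0` there is `δ > 0` such that for all `q` with `0 < ‖q‖ < δ`
and `‖q‖ < 1` and all `z ∈ K`, `‖T(z; q) - sin(πz)‖ < ε`. -/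
theorem theta_trig_degeneration_uniform (K : Set ℂ) (hK : IsCompact K) :
    ∀ ε > (0 : ℝ), ∃ δ > (0 : ℝ), ∀ q : ℂ, 0 < ‖q‖ → ‖q‖ < δ → ‖q‖ < 1 →
      ∀ z ∈ K, ‖thetaSeries z q - Complex.sin ((π : ℂ) * z)‖ < ε := by
  intro ε hε
  obtain ⟨R, hR⟩ := hK.isBounded.exists_norm_le
  set s : ℝ → ℝ := fun t ↦ t ^ 2 * Real.exp (2 * π * R)
  have hs : Tendsto s (𝓝 0) (𝓝 0) := by
    simpa [s] using (by fun_prop : Continuous s).tendsto 0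
  have hbound : Tendsto (fun t ↦ Real.exp (π * R) * s t / (1 - s t)) (𝓝 0) (𝓝 0) := by
    simpa [Pi.div_def] using
      (hs.const_mul _).div ((tendsto_const_nhds (x := (1 : ℝ))).sub hs) (by simp)
  obtain ⟨δ, hδ, hsmall⟩ := Metric.eventually_nhds_iff.1
    ((hs.eventually (gt_mem_nhds one_pos)).and (hbound.eventually (gt_mem_nhds hε)))
  refine ⟨δ, hδ, fun q _ hqδ hq₁ z hz ↦ ?_⟩
  obtain ⟨hs₁, hsε⟩ := hsmall (by simpa using hqδ : dist ‖q‖ 0 < δ)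
  exact (norm_thetaSeries_sub_sin_le (hR z hz) hq₁.le hs₁).trans_lt hsε
end

section
/- For every q ∈ ℂ with ‖q‖ < 1, the function z ↦ T(z; q) is differentiable at z = 0 with derivative π·D(q); that is, HasDerivAt (fun z => ∑' n : ℕ, (-1)^n * q^(n*(n+1)) * Complex.sin ((2*n+1)*π*z)) (π * ∑' n : ℕ, (-1)^n * (2*n+1) * q^(n*(n+1))) 0. -/
/-!
Differentiate term by term on the unit disc. There `‖cos w‖ ≤ exp ‖w‖`, so the derivative of the
`n`-th term is dominated by `‖q‖^(n(n+1)) (2n+1)π e^((2n+1)π)`, and this is summable because the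
Gaussian decay of `‖q‖^(n²)` beats any geometric growth.
-/

open Complex Real Filter Topology

theorem Complex.norm_cos_le_exp_norm (w : ℂ) : ‖cos w‖ ≤ Real.exp ‖w‖ := by
  have hexp : ∀ v : ℂ, ‖v‖ = ‖w‖ → ‖exp v‖ ≤ Real.exp ‖w‖ :=
    fun v hv => hv ▸ norm_exp_le_exp_norm v
  have htwo : ‖2 * cos w‖ ≤ 2 * Real.exp ‖w‖ := by
    rw [two_cos]
    calc _ ≤ ‖exp (w * I)‖ + ‖exp (-w * I)‖ := norm_add_le _ _
      _ ≤ _ := by linarith [hexp (w * I) (by simp), hexp (-w * I) (by simp)]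
  rw [norm_mul, Complex.norm_two] at htwo
  linarith

theorem summable_pow_mul_pow_mul_self {𝕜 : Type*} [NormedField 𝕜] [CompleteSpace 𝕜]
    (c : 𝕜) {x : 𝕜} (hx : ‖x‖ < 1) : Summable fun n : ℕ => c ^ n * x ^ (n * n) := by
  have hlim : Tendsto (fun n => c * x ^ n) atTop (𝓝 0) := by
    simpa using (tendsto_pow_atTop_nhds_zero_of_norm_lt_one hx).const_mul c
  have hsmall : ∀ᶠ n in atTop, ‖c * x ^ n‖ ≤ 1 / 2 :=
    hlim.norm.eventually (ge_mem_nhds (by norm_num))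
  refine summable_geometric_two.of_norm_bounded_eventually_nat ?_
  filter_upwards [hsmall] with n hn
  calc ‖c ^ n * x ^ (n * n)‖ = ‖c * x ^ n‖ ^ n := by rw [pow_mul, ← mul_pow, norm_pow]
    _ ≤ (1 / 2) ^ n := pow_le_pow_left₀ (norm_nonneg _) hn n

theorem hasDerivAt_tsum_mul_sin {a b : ℕ → ℂ}
    (hab : Summable fun n => ‖a n‖ * ‖b n‖ * Real.exp ‖b n‖) {z : ℂ} (hz : ‖z‖ < 1) :
    HasDerivAt (fun w => ∑' n, a n * sin (b n * w)) (∑' n, a n * (b n * cos (b n * z))) z := by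
  have hderiv : ∀ n, ∀ y ∈ Metric.ball (0 : ℂ) 1,
      HasDerivAt (fun w => a n * sin (b n * w)) (a n * (b n * cos (b n * y))) y := by
    intro n y _
    simpa [mul_comm] using (((hasDerivAt_id y).const_mul (b n)).csin).const_mul (a n)
  have hbound : ∀ n, ∀ y ∈ Metric.ball (0 : ℂ) 1,
      ‖a n * (b n * cos (b n * y))‖ ≤ ‖a n‖ * ‖b n‖ * Real.exp ‖b n‖ := by
    intro n y hy
    have hby : ‖b n * y‖ ≤ ‖b n‖ := by
      rw [norm_mul]
      exact mul_le_of_le_one_right (norm_nonneg _) (mem_ball_zero_iff.1 hy).le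
    rw [norm_mul, norm_mul, ← mul_assoc]
    gcongr
    exact (norm_cos_le_exp_norm _).trans (Real.exp_le_exp.2 hby)
  exact hasDerivAt_tsum_of_isPreconnected hab Metric.isOpen_ball
    (convex_ball 0 1).isPreconnected hderiv hbound (Metric.mem_ball_self one_pos)
    (by simp) (mem_ball_zero_iff.2 hz)

theorem mul_exp_le_exp_two_mul (t : ℝ) : t * Real.exp t ≤ Real.exp (2 * t) := by
  rw [two_mul, Real.exp_add]
  gcongr
  linarith [Real.add_one_le_exp t]

theorem summable_theta_majorant {q : ℂ} (hq : ‖q‖ < 1) :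
    Summable fun n : ℕ => ‖(-1) ^ n * q ^ (n * (n + 1))‖ * ‖(2 * (n : ℂ) + 1) * (π : ℂ)‖ *
      Real.exp ‖(2 * (n : ℂ) + 1) * (π : ℂ)‖ := by
  have hmaj := (summable_pow_mul_pow_mul_self (Real.exp (4 * π)) (x := ‖q‖)
    (by simpa using hq)).mul_left (Real.exp (2 * π))
  refine hmaj.of_nonneg_of_le (fun n => by positivity) fun n => ?_
  have hb : ‖(2 * (n : ℂ) + 1) * (π : ℂ)‖ = (2 * n + 1) * π := by
    rw [show (2 * (n : ℂ) + 1) * (π : ℂ) = (((2 * n + 1) * π : ℝ) : ℂ) by push_cast; ring,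
      Complex.norm_of_nonneg (by positivity)]
  have hexp : Real.exp (2 * ((2 * n + 1) * π)) = Real.exp (2 * π) * Real.exp (4 * π) ^ n := by
    rw [← Real.exp_nat_mul, ← Real.exp_add]; ring_nf
  have hpow : ‖q‖ ^ (n * (n + 1)) ≤ ‖q‖ ^ (n * n) :=
    pow_le_pow_of_le_one (norm_nonneg q) hq.le (Nat.mul_le_mul_left n n.le_succ)
  rw [norm_mul, norm_pow, norm_neg, norm_one, one_pow, one_mul, norm_pow, hb, mul_assoc]
  calc ‖q‖ ^ (n * (n + 1)) * ((2 * n + 1) * π * Real.exp ((2 * n + 1) * π))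
      ≤ ‖q‖ ^ (n * n) * Real.exp (2 * ((2 * n + 1) * π)) := by
        gcongr
        exact mul_exp_le_exp_two_mul _
    _ = Real.exp (2 * π) * (Real.exp (4 * π) ^ n * ‖q‖ ^ (n * n)) := by rw [hexp]; ring

/-- Derivative of the theta series at the origin: for `‖q‖ < 1`, the function
`z ↦ T(z; q) = ∑_{n≥0} (-1)^n q^{n(n+1)} sin((2n+1)πz)` is differentiable at
`z = 0` with derivative `π · D(q)`, where `D(q) = ∑_{n≥0} (-1)^n (2n+1) q^{n(n+1)}`. -/
theorem theta_deriv_at_zero (q : ℂ) (hq : ‖q‖ < 1) :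
    HasDerivAt
      (fun z : ℂ => ∑' n : ℕ,
        (-1) ^ n * q ^ (n * (n + 1)) * Complex.sin ((2 * (n : ℂ) + 1) * (π : ℂ) * z))
      ((π : ℂ) * ∑' n : ℕ, (-1) ^ n * (2 * (n : ℂ) + 1) * q ^ (n * (n + 1))) 0 := by
  have hderiv := hasDerivAt_tsum_mul_sin (summable_theta_majorant hq) (z := 0) (by simp)
  convert hderiv using 1
  rw [← tsum_mul_left]
  congr 1 with n
  simp only [mul_zero, Complex.cos_zero]
  ring
end
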